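/- arXiv:1302.3147 — 3 statements merged into one kernel-verified Lean document; each statement's English description precedes it below -/
import Mathlib

section
/- For every real x > 0, one has (1 − e^{−x})^x ≥ 2^{−log 2}, with equality attained at x = log 2; that is, the minimum of the function x ↦ (1 − e^{−x})^x over (0, ∞) equals δ := 2^{−log 2} and is attained at x = log 2. -/
/-!
Writing `a = exp (-x) ∈ (0, 1)`, the exponent `x * log (1 - a)` equals `-(log a * log (1 - a))`,
so the claim is `log a * log (1 - a) ≤ (log 2)²`. The product is symmetric under `a ↦ 1 - a`
and increasing on `(0, 1/2]`: its derivative has the sign of `(1 - a) log (1 - a) - a log a`,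
which is nonnegative there by two applications of `log y ≤ y - 1`.
-/

/-- δ = 2^{-log 2} = exp(-(log 2)²), the minimum over x > 0 of (1 - e^{-x})^x. -/
noncomputable def rickerDelta : ℝ := (2 : ℝ) ^ (-Real.log 2)

open Real Set

theorem mul_log_le_one_sub_mul_log_one_sub {a : ℝ} (ha₀ : 0 < a) (ha : a ≤ 1 / 2) :
    a * log a ≤ (1 - a) * log (1 - a) := by
  have hb : 0 < 1 - a := by linarith
  have ht : a / (1 - a) * (1 - a) = a := div_mul_cancel₀ a hb.ne'
  have hL : -(a / (1 - a)) ≤ log (1 - a) := by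
    have hinv : 1 - (1 - a)⁻¹ = -(a / (1 - a)) := by field_simp; ring
    exact hinv ▸ one_sub_inv_le_log_of_pos hb
  have hD : log a - log (1 - a) ≤ a / (1 - a) - 1 := by
    rw [← log_div ha₀.ne' hb.ne']
    exact log_le_sub_one_of_pos (div_pos ha₀ hb)
  nlinarith [mul_le_mul_of_nonneg_left hD ha₀.le,
    mul_le_mul_of_nonneg_left hL (by linarith : (0 : ℝ) ≤ 1 - 2 * a)]

theorem hasDerivAt_log_mul_log_one_sub {a : ℝ} (ha₀ : a ≠ 0) (ha₁ : a ≠ 1) :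
    HasDerivAt (fun x => log x * log (1 - x)) (log (1 - a) / a - log a / (1 - a)) a := by
  have h₁ : HasDerivAt (fun x => log (1 - x)) (-1 / (1 - a)) a :=
    ((hasDerivAt_id a).const_sub 1).log (sub_ne_zero.mpr ha₁.symm)
  exact ((hasDerivAt_log ha₀).mul h₁).congr_deriv (by ring)

theorem monotoneOn_log_mul_log_one_sub :
    MonotoneOn (fun x => log x * log (1 - x)) (Ioc 0 (1 / 2)) := by
  have hderiv : ∀ a ∈ Ioc (0 : ℝ) (1 / 2),
      HasDerivAt (fun x => log x * log (1 - x)) (log (1 - a) / a - log a / (1 - a)) a :=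
    fun a ha => hasDerivAt_log_mul_log_one_sub ha.1.ne' (by linarith [ha.2])
  refine monotoneOn_of_hasDerivWithinAt_nonneg (convex_Ioc 0 (1 / 2))
    (fun a ha => (hderiv a ha).continuousAt.continuousWithinAt)
    (fun a ha => (hderiv a (Ioo_subset_Ioc_self (by rwa [interior_Ioc] at ha))).hasDerivWithinAt)
    (fun a ha => ?_)
  rw [interior_Ioc] at ha
  have hb : 0 < 1 - a := by linarith [ha.2]
  rw [sub_nonneg, div_le_div_iff₀ hb ha.1]
  linarith [mul_log_le_one_sub_mul_log_one_sub ha.1 ha.2.le]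

theorem log_mul_log_one_sub_le {a : ℝ} (ha₀ : 0 < a) (ha₁ : a < 1) :
    log a * log (1 - a) ≤ log 2 ^ 2 := by
  have hhalf : log (1 / 2 : ℝ) * log (1 - 1 / 2) = log 2 ^ 2 := by
    rw [show (1 : ℝ) - 1 / 2 = 1 / 2 by norm_num, one_div, log_inv]
    ring
  have hmem : (1 / 2 : ℝ) ∈ Ioc 0 (1 / 2) := ⟨by norm_num, le_rfl⟩
  rcases le_total a (1 / 2) with h | h
  · exact hhalf ▸ monotoneOn_log_mul_log_one_sub ⟨ha₀, h⟩ hmem h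
  · have := monotoneOn_log_mul_log_one_sub ⟨sub_pos.mpr ha₁, by linarith⟩ hmem
      (by linarith : 1 - a ≤ 1 / 2)
    dsimp only at this
    rw [sub_sub_cancel, hhalf] at this
    linarith

theorem rickerDelta_eq_exp : rickerDelta = exp (-log 2 ^ 2) := by
  rw [rickerDelta, rpow_def_of_pos two_pos]
  ring_nf

/-- The minimum of x ↦ (1 - e^{-x})^x over (0,∞) equals δ = 2^{-log 2},
and it is attained at x = log 2. -/
theorem min_of_one_sub_exp_neg_rpow :
    (∀ x : ℝ, 0 < x → rickerDelta ≤ (1 - Real.exp (-x)) ^ x) ∧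
    (1 - Real.exp (-Real.log 2)) ^ Real.log 2 = rickerDelta := by
  constructor
  · intro x hx
    have ha₁ : exp (-x) < 1 := exp_lt_one_iff.mpr (neg_lt_zero.mpr hx)
    have hF := log_mul_log_one_sub_le (exp_pos (-x)) ha₁
    rw [log_exp] at hF
    rw [rickerDelta_eq_exp, rpow_def_of_pos (sub_pos.mpr ha₁), exp_le_exp]
    linarith
  · rw [exp_neg, exp_log two_pos, show (1 : ℝ) - 2⁻¹ = 2⁻¹ by norm_num, rickerDelta,
      rpow_neg zero_le_two, inv_rpow zero_le_two]
end

section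
/- For the stochastic Ricker competition chain (U_t, V_t), started from any initial state (m, n) ∈ ℤ_{≥0}², almost surely there exists a time t with U_t = 0 and V_t = 0 (and the chain then stays at (0,0) forever); in particular the chain has a finite lifetime in the open first quadrant almost surely. -/
open Filter

/-- The modified offspring distribution: given inhibition exponent c, the litter size has
P(ξ = k) = e^{−c}·q(k) for k ≥ 1 and P(ξ = 0) = 1 − e^{−c}·(1 − q(0)). -/
noncomputable def modPMF (c : ℝ) (q : ℕ → ℝ) : ℕ → ℝ :=
  fun k => if k = 0 then 1 - Real.exp (-c) * (1 - q 0) else Real.exp (-c) * q k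

/-- `convPow f m` is the m-fold convolution power of the pmf `f` on ℕ: the distribution of
the sum of m i.i.d. random variables with pmf `f` (the point mass at 0 when m = 0). -/
noncomputable def convPow (f : ℕ → ℝ) : ℕ → ℕ → ℝ
  | 0, k => if k = 0 then 1 else 0
  | m + 1, k => ∑ i ∈ Finset.range (k + 1), f i * convPow f m (k - i)

/-- The transition probabilities of the stochastic Ricker competition chain (U_t, V_t) on
ℤ_{≥0}²: from (m,n), U_{t+1} is a sum of m i.i.d. litters with pmf `modPMF (K(m+bn)) q` and,
independently, V_{t+1} is a sum of n i.i.d. litters with pmf `modPMF (K̃(am+n)) q̃`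
(a coordinate equal to 0 stays 0). -/
noncomputable def rickerKernel (a b K K' : ℝ) (q q' : ℕ → ℝ) :
    ℕ × ℕ → ℕ × ℕ → ℝ :=
  fun p p' =>
    convPow (modPMF (K * ((p.1 : ℝ) + b * (p.2 : ℝ))) q) p.1 p'.1 *
    convPow (modPMF (K' * (a * (p.1 : ℝ) + (p.2 : ℝ))) q') p.2 p'.2

/-- t-step transition probabilities of a Markov kernel on ℤ_{≥0}². -/
noncomputable def kernelPow (P : ℕ × ℕ → ℕ × ℕ → ℝ) : ℕ → ℕ × ℕ → ℕ × ℕ → ℝ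
  | 0, p, p' => if p = p' then 1 else 0
  | t + 1, p, p' => ∑' s : ℕ × ℕ, P p s * kernelPow P t s p'

/-!
Every state is absorbed at (0,0) in one step with probability at least
`δ = exp (-K⁻¹) * exp (-K'⁻¹)`, uniformly in the state: each of the `m` litters of the first
species is empty with probability at least `1 - exp (-K m) ≥ exp (-(K m)⁻¹)`, and similarly
for the second species. Since (0,0) is absorbing, the chain avoids it up to time `t` with
probability at most `(1 - δ) ^ t`.
-/

open Real

section StochasticKernel

variable {P : ℕ × ℕ → ℕ × ℕ → ℝ}

lemma summable_mul_of_le_one {α : Type*} {w f : α → ℝ} (hw0 : ∀ s, 0 ≤ w s)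
    (hw : Summable w) (hf0 : ∀ s, 0 ≤ f s) (hf1 : ∀ s, f s ≤ 1) :
    Summable fun s => w s * f s :=
  hw.of_nonneg_of_le (fun s => mul_nonneg (hw0 s) (hf0 s))
    (fun s => mul_le_of_le_one_right (hw0 s) (hf1 s))

lemma kernelPow_nonneg (hP0 : ∀ p s, 0 ≤ P p s) (t : ℕ) (p p' : ℕ × ℕ) :
    0 ≤ kernelPow P t p p' := by
  induction t generalizing p with
  | zero => unfold kernelPow; split <;> norm_num
  | succ t ih => exact tsum_nonneg fun s => mul_nonneg (hP0 p s) (ih s)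

lemma kernelPow_le_one (hP0 : ∀ p s, 0 ≤ P p s) (hP1 : ∀ p, HasSum (P p) 1) (t : ℕ)
    (p p' : ℕ × ℕ) : kernelPow P t p p' ≤ 1 := by
  induction t generalizing p with
  | zero => unfold kernelPow; split <;> norm_num
  | succ t ih =>
    calc kernelPow P (t + 1) p p' = ∑' s, P p s * kernelPow P t s p' := rfl
      _ ≤ ∑' s, P p s :=
        (summable_mul_of_le_one (hP0 p) (hP1 p).summable (kernelPow_nonneg hP0 t · p') ih
          ).tsum_le_tsum (fun s => mul_le_of_le_one_right (hP0 p s) (ih s)) (hP1 p).summable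
      _ = 1 := (hP1 p).tsum_eq

lemma kernelPow_self_of_absorbing {z : ℕ × ℕ} (hz : ∀ s, P z s = if s = z then 1 else 0)
    (t : ℕ) : kernelPow P t z z = 1 := by
  induction t with
  | zero => simp [kernelPow]
  | succ t ih =>
    calc kernelPow P (t + 1) z z = ∑' s, P z s * kernelPow P t s z := rfl
      _ = ∑' s, if s = z then kernelPow P t z z else 0 := by
        congr! 2 with s
        rw [hz]; split_ifs with h <;> simp [h]
      _ = 1 := by rw [tsum_ite_eq, ih]

/- First-step analysis: `kernelPow P t · z` is at least `c = 1 - (1 - δ) ^ t` everywhere and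
equal to `1` at `z`, so one more step gives at least `c + (1 - c) * P p z`. -/
lemma one_sub_pow_le_kernelPow (hP0 : ∀ p s, 0 ≤ P p s) (hP1 : ∀ p, HasSum (P p) 1)
    {z : ℕ × ℕ} (hz : ∀ s, P z s = if s = z then 1 else 0) {δ : ℝ} (hδ : ∀ p, δ ≤ P p z)
    (t : ℕ) (p : ℕ × ℕ) : 1 - (1 - δ) ^ t ≤ kernelPow P t p z := by
  induction t generalizing p with
  | zero => simpa using kernelPow_nonneg hP0 0 p z
  | succ t ih =>
    set c := 1 - (1 - δ) ^ t
    have hδ1 : δ ≤ 1 := (hδ z).trans_eq (by simp [hz])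
    have hc1 : c ≤ 1 := by have := pow_nonneg (sub_nonneg.2 hδ1) t; linarith
    set g : ℕ × ℕ → ℝ := fun s => c + (1 - c) * if s = z then 1 else 0
    have hg : ∀ s, g s ≤ kernelPow P t s z := fun s => by
      by_cases h : s = z
      · subst h; simp [g, kernelPow_self_of_absorbing hz]
      · simpa [g, h] using ih s
    have hsum_g : HasSum (fun s => P p s * g s) (c + (1 - c) * P p z) := by
      have := ((hP1 p).mul_right c).add ((hasSum_ite_eq z (P p z)).mul_left (1 - c))
      rw [one_mul] at this
      refine this.congr_fun fun s => ?_
      by_cases h : s = z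
      · subst h; simp [g]; ring
      · simp [g, h]
    calc 1 - (1 - δ) ^ (t + 1) = c + (1 - c) * δ := by ring
      _ ≤ c + (1 - c) * P p z := by have := hδ p; gcongr
      _ ≤ ∑' s, P p s * kernelPow P t s z :=
        hasSum_le (fun s => mul_le_mul_of_nonneg_left (hg s) (hP0 p s)) hsum_g
          (summable_mul_of_le_one (hP0 p) (hP1 p).summable (kernelPow_nonneg hP0 t · z)
            (kernelPow_le_one hP0 hP1 t · z)).hasSum

theorem tendsto_kernelPow_of_uniform_absorption (hP0 : ∀ p s, 0 ≤ P p s)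
    (hP1 : ∀ p, HasSum (P p) 1) {z : ℕ × ℕ} (hz : ∀ s, P z s = if s = z then 1 else 0)
    {δ : ℝ} (hδ0 : 0 < δ) (hδ : ∀ p, δ ≤ P p z) (p : ℕ × ℕ) :
    Tendsto (fun t => kernelPow P t p z) atTop (nhds 1) := by
  have hδ1 : δ ≤ 1 := (hδ z).trans_eq (by simp [hz])
  have hlow : Tendsto (fun t : ℕ => 1 - (1 - δ) ^ t) atTop (nhds 1) := by
    simpa using tendsto_const_nhds.sub
      (tendsto_pow_atTop_nhds_zero_of_lt_one (sub_nonneg.2 hδ1) (by linarith))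
  exact tendsto_of_tendsto_of_tendsto_of_le_of_le hlow tendsto_const_nhds
    (one_sub_pow_le_kernelPow hP0 hP1 hz hδ · p) (kernelPow_le_one hP0 hP1 · p z)

end StochasticKernel

section ConvolutionPower

variable {f : ℕ → ℝ}

lemma convPow_nonneg (hf : ∀ k, 0 ≤ f k) (m k : ℕ) : 0 ≤ convPow f m k := by
  induction m generalizing k with
  | zero => unfold convPow; split <;> norm_num
  | succ m ih => exact Finset.sum_nonneg fun i _ => mul_nonneg (hf i) (ih _)

lemma convPow_hasSum (hf : ∀ k, 0 ≤ f k) (hf1 : HasSum f 1) (m : ℕ) :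
    HasSum (convPow f m) 1 := by
  induction m with
  | zero => exact (hasSum_ite_eq 0 1).congr_fun fun k => by simp [convPow]
  | succ m ih =>
    have h := hasSum_sum_range_mul_of_summable_norm
      (hf1.summable.congr fun k => (Real.norm_of_nonneg (hf k)).symm)
      (ih.summable.congr fun k => (Real.norm_of_nonneg (convPow_nonneg hf m k)).symm)
    rw [hf1.tsum_eq, ih.tsum_eq, one_mul] at h
    exact h.congr_fun fun k => rfl

lemma convPow_apply_zero (m : ℕ) : convPow f m 0 = f 0 ^ m := by
  induction m with
  | zero => simp [convPow]
  | succ m ih => simp [convPow, ih, pow_succ, mul_comm]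

end ConvolutionPower

section ModPMF

variable {q : ℕ → ℝ}

lemma modPMF_nonneg {c : ℝ} (hc : 0 ≤ c) (hq : ∀ k, 0 ≤ q k) (hq1 : HasSum q 1) (k : ℕ) :
    0 ≤ modPMF c q k := by
  have hq01 : q 0 ≤ 1 := le_hasSum hq1 0 fun i _ => hq i
  have hexp : exp (-c) ≤ 1 := exp_le_one_iff.2 (neg_nonpos.2 hc)
  unfold modPMF
  split
  · nlinarith [hq 0, exp_pos (-c)]
  · exact mul_nonneg (exp_pos _).le (hq k)

lemma modPMF_hasSum (c : ℝ) (hq1 : HasSum q 1) : HasSum (modPMF c q) 1 := by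
  have := (hq1.mul_left (exp (-c))).add (hasSum_ite_eq 0 (1 - exp (-c)))
  rw [mul_one, add_sub_cancel] at this
  refine this.congr_fun fun k => ?_
  unfold modPMF
  split_ifs with h
  · subst h; ring
  · ring

/- From `log u ≥ 1 - u⁻¹` at `u = 1 - exp (-c)`, together with `exp c - 1 ≥ c`. -/
lemma exp_neg_inv_le_one_sub_exp_neg {c : ℝ} (hc : 0 < c) : exp (-c⁻¹) ≤ 1 - exp (-c) := by
  have hu : 0 < 1 - exp (-c) := sub_pos.2 (exp_lt_one_iff.2 (neg_lt_zero.2 hc))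
  have hinv : (1 - exp (-c))⁻¹ - 1 ≤ c⁻¹ := by
    have key : (c + 1) * exp (-c) ≤ 1 :=
      calc (c + 1) * exp (-c) ≤ exp c * exp (-c) := by gcongr; exact add_one_le_exp c
        _ = 1 := by rw [← exp_add]; simp
    rw [inv_eq_one_div, inv_eq_one_div, div_sub_one hu.ne', div_le_div_iff₀ hu hc]
    linarith
  calc exp (-c⁻¹) ≤ exp (log (1 - exp (-c))) := by
        gcongr; linarith [one_sub_inv_le_log_of_pos hu]
    _ = 1 - exp (-c) := exp_log hu

lemma exp_neg_inv_le_modPMF_zero {c : ℝ} (hc : 0 < c) (hq0 : 0 ≤ q 0) :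
    exp (-c⁻¹) ≤ modPMF c q 0 := by
  have := exp_neg_inv_le_one_sub_exp_neg hc
  simp only [modPMF, if_pos]
  nlinarith [exp_pos (-c)]

/- The bound is uniform in `m` because the inhibition exponent `K x` grows at least like
`K m`: `exp (-(K x)⁻¹) ^ m = exp (-m / (K x)) ≥ exp (-K⁻¹)`. -/
lemma exp_neg_inv_le_convPow_modPMF_zero {K x : ℝ} (hK : 0 < K) {m : ℕ} (hm : (m : ℝ) ≤ x)
    (hq0 : 0 ≤ q 0) : exp (-K⁻¹) ≤ convPow (modPMF (K * x) q) m 0 := by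
  rw [convPow_apply_zero]
  rcases Nat.eq_zero_or_pos m with rfl | hm0
  · simpa using inv_pos.2 hK |>.le
  have hx : 0 < x := lt_of_lt_of_le (by exact_mod_cast hm0) hm
  have hKx : 0 < K * x := mul_pos hK hx
  calc exp (-K⁻¹) ≤ exp (m * -(K * x)⁻¹) := by
        gcongr
        rw [mul_neg, neg_le_neg_iff, ← div_eq_mul_inv, div_le_iff₀ hKx,
          inv_mul_cancel_left₀ hK.ne']
        exact hm
    _ = exp (-(K * x)⁻¹) ^ m := exp_nat_mul _ m
    _ ≤ modPMF (K * x) q 0 ^ m := by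
        gcongr
        exact exp_neg_inv_le_modPMF_zero hKx hq0

end ModPMF

section RickerKernel

variable {a b K K' : ℝ} {q q' : ℕ → ℝ}

lemma rickerKernel_nonneg (ha : 0 ≤ a) (hb : 0 ≤ b) (hK : 0 ≤ K) (hK' : 0 ≤ K')
    (hq : ∀ k, 0 ≤ q k) (hq1 : HasSum q 1) (hq' : ∀ k, 0 ≤ q' k) (hq1' : HasSum q' 1)
    (p s : ℕ × ℕ) : 0 ≤ rickerKernel a b K K' q q' p s :=
  mul_nonneg (convPow_nonneg (modPMF_nonneg (by positivity) hq hq1) _ _)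
    (convPow_nonneg (modPMF_nonneg (by positivity) hq' hq1') _ _)

lemma rickerKernel_hasSum (ha : 0 ≤ a) (hb : 0 ≤ b) (hK : 0 ≤ K) (hK' : 0 ≤ K')
    (hq : ∀ k, 0 ≤ q k) (hq1 : HasSum q 1) (hq' : ∀ k, 0 ≤ q' k) (hq1' : HasSum q' 1)
    (p : ℕ × ℕ) : HasSum (rickerKernel a b K K' q q' p) 1 := by
  have hf := modPMF_nonneg (c := K * (p.1 + b * p.2)) (by positivity) hq hq1
  have hg := modPMF_nonneg (c := K' * (a * p.1 + p.2)) (by positivity) hq' hq1'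
  have hF := convPow_hasSum hf (modPMF_hasSum _ hq1) p.1
  have hG := convPow_hasSum hg (modPMF_hasSum _ hq1') p.2
  have := hF.mul hG
    (hF.summable.mul_of_nonneg hG.summable (convPow_nonneg hf _) (convPow_nonneg hg _))
  rwa [one_mul] at this

lemma rickerKernel_zero_zero (s : ℕ × ℕ) :
    rickerKernel a b K K' q q' (0, 0) s = if s = (0, 0) then 1 else 0 := by
  obtain ⟨m, n⟩ := s
  by_cases hm : m = 0 <;> by_cases hn : n = 0 <;> simp [rickerKernel, convPow, hm, hn]

lemma exp_neg_inv_mul_le_rickerKernel (ha : 0 ≤ a) (hb : 0 ≤ b) (hK : 0 < K) (hK' : 0 < K')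
    (hq0 : 0 ≤ q 0) (hq0' : 0 ≤ q' 0) (p : ℕ × ℕ) :
    exp (-K⁻¹) * exp (-K'⁻¹) ≤ rickerKernel a b K K' q q' p (0, 0) := by
  have h1 := exp_neg_inv_le_convPow_modPMF_zero (m := p.1) (x := p.1 + b * p.2) hK
    (le_add_of_nonneg_right (by positivity)) hq0
  have h2 := exp_neg_inv_le_convPow_modPMF_zero (m := p.2) (x := a * p.1 + p.2) hK'
    (le_add_of_nonneg_left (by positivity)) hq0'
  exact mul_le_mul h1 h2 (exp_pos _).le ((exp_pos _).le.trans h1)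

end RickerKernel

theorem ricker_chain_extinction_as_general
    (a b K K' : ℝ) (ha : 0 < a) (hb : 0 < b) (hK : 0 < K) (hK' : 0 < K')
    (q q' : ℕ → ℝ)
    (hq : ∀ k, 0 ≤ q k) (hq1 : HasSum q 1)
    (hq' : ∀ k, 0 ≤ q' k) (hq1' : HasSum q' 1)
    (p0 : ℕ × ℕ) :
    Tendsto (fun t : ℕ => kernelPow (rickerKernel a b K K' q q') t p0 (0, 0))
      atTop (nhds 1) :=
  tendsto_kernelPow_of_uniform_absorption
    (rickerKernel_nonneg ha.le hb.le hK.le hK'.le hq hq1 hq' hq1')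
    (rickerKernel_hasSum ha.le hb.le hK.le hK'.le hq hq1 hq' hq1')
    rickerKernel_zero_zero (by positivity)
    (exp_neg_inv_mul_le_rickerKernel ha.le hb.le hK hK' (hq 0) (hq' 0)) p0

/-- The stochastic Ricker competition chain goes extinct almost surely: started from any
state (m,n), the probability of having been absorbed at (0,0) by time t tends to 1 as
t → ∞ (the state (0,0) is absorbing, so this says that almost surely there is a time t
with U_t = 0 and V_t = 0, and the chain then stays at (0,0) forever); in particular the
chain has a finite lifetime in the open first quadrant almost surely. -/
theorem ricker_chain_extinction_as
    (r r' a b K K' : ℝ) (ha : 0 < a) (hb : 0 < b) (hK : 0 < K) (hK' : 0 < K')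
    (q q' : ℕ → ℝ)
    (hq : ∀ k, 0 ≤ q k) (hq1 : HasSum q 1)
    (hqmean : HasSum (fun k : ℕ => (k : ℝ) * q k) (Real.exp r))
    (hqvar : ∃ v : ℝ, HasSum (fun k : ℕ => (k : ℝ) ^ 2 * q k) v)
    (hq' : ∀ k, 0 ≤ q' k) (hq1' : HasSum q' 1)
    (hqmean' : HasSum (fun k : ℕ => (k : ℝ) * q' k) (Real.exp r'))
    (hqvar' : ∃ v : ℝ, HasSum (fun k : ℕ => (k : ℝ) ^ 2 * q' k) v)
    (p0 : ℕ × ℕ) :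
    Tendsto (fun t : ℕ => kernelPow (rickerKernel a b K K' q q') t p0 (0, 0))
      atTop (nhds 1) :=
  ricker_chain_extinction_as_general a b K K' ha hb hK hK' q q' hq hq1 hq' hq1' p0
end

section
/- Let r > 0, K > 0 and x₀ > 0, and define the one-dimensional Ricker orbit by x_{t+1} = x_t·e^{r − K·x_t} for t = 0, 1, 2, …. Then the arithmetic averages converge: (1/n)·Σ_{t=0}^{n−1} x_t → r/K as n → ∞. -/
/-!
Taking logarithms turns the recursion into `log x_{t+1} - log x_t = r - K x_t`, which telescopes:
`K · ∑_{t<n} x_t = n r - (log x_n - log x_0)`. The orbit stays in a compact interval of `(0, ∞)`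
(the map `y ↦ y e^{r - K y}` is bounded by `e^{r-1}/K`, and it does not decrease points below
`r/K`), so `log x_n` is bounded and `(log x_n - log x_0)/n → 0`.
-/

open Filter Topology Real

theorem tendsto_div_natCast_of_abs_le {f : ℕ → ℝ} {C : ℝ} (hf : ∀ n, |f n| ≤ C) :
    Tendsto (fun n : ℕ => f n / n) atTop (𝓝 0) := by
  refine squeeze_zero_norm (fun n => ?_) (tendsto_const_div_atTop_nhds_zero_nat C)
  rw [norm_div, Real.norm_eq_abs, Real.norm_natCast]
  exact div_le_div_of_nonneg_right (hf n) n.cast_nonneg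

noncomputable def rickerMap (r K y : ℝ) : ℝ := y * exp (r - K * y)

section RickerMap

variable {r K y : ℝ}

theorem rickerMap_le (hK : 0 < K) (y : ℝ) : rickerMap r K y ≤ exp (r - 1) / K := by
  have hKy : K * y ≤ exp (K * y - 1) := by linarith [add_one_le_exp (K * y - 1)]
  rw [le_div_iff₀ hK]
  calc y * exp (r - K * y) * K = exp (r - K * y) * (K * y) := by ring
    _ ≤ exp (r - K * y) * exp (K * y - 1) := by gcongr
    _ = exp (r - 1) := by rw [← exp_add]; ring_nf

theorem min_le_rickerMap {M : ℝ} (hK : 0 < K) (hy : 0 < y) (hyM : y ≤ M) :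
    min y (r / K * exp (r - K * M)) ≤ rickerMap r K y := by
  rcases le_or_gt y (r / K) with hle | hgt
  · have hKy : K * y ≤ r := by rwa [le_div_iff₀' hK] at hle
    calc min y (r / K * exp (r - K * M)) ≤ y * 1 := by rw [mul_one]; exact min_le_left _ _
      _ ≤ y * exp (r - K * y) := by gcongr; exact one_le_exp (by linarith)
  · calc min y (r / K * exp (r - K * M)) ≤ r / K * exp (r - K * M) := min_le_right _ _
      _ ≤ y * exp (r - K * y) := by gcongr

theorem log_rickerMap (hy : 0 < y) : log (rickerMap r K y) = log y + (r - K * y) := by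
  rw [rickerMap, log_mul hy.ne' (exp_ne_zero _), log_exp]

end RickerMap

section RickerOrbit

variable {r K : ℝ} {x : ℕ → ℝ} (hrec : ∀ t, x (t + 1) = rickerMap r K (x t))
include hrec

theorem ricker_orbit_pos (hx0 : 0 < x 0) (t : ℕ) : 0 < x t := by
  induction t with
  | zero => exact hx0
  | succ t ih => rw [hrec, rickerMap]; positivity

theorem ricker_orbit_le (hK : 0 < K) (t : ℕ) : x t ≤ max (x 0) (exp (r - 1) / K) := by
  cases t with
  | zero => exact le_max_left _ _
  | succ t => exact (hrec t ▸ rickerMap_le hK (x t)).trans (le_max_right _ _)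

theorem ricker_orbit_ge (hK : 0 < K) (hx0 : 0 < x 0) (t : ℕ) :
    min (x 0) (r / K * exp (r - K * max (x 0) (exp (r - 1) / K))) ≤ x t := by
  induction t with
  | zero => exact min_le_left _ _
  | succ t ih =>
    rw [hrec]
    exact (le_min ih (min_le_right _ _)).trans
      (min_le_rickerMap hK (ricker_orbit_pos hrec hx0 t) (ricker_orbit_le hrec hK t))

theorem ricker_orbit_abs_log_le (hr : 0 < r) (hK : 0 < K) (hx0 : 0 < x 0) :
    ∃ C, ∀ t, |log (x t)| ≤ C := by
  set M := max (x 0) (exp (r - 1) / K)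
  set m := min (x 0) (r / K * exp (r - K * M))
  have hm : 0 < m := lt_min hx0 (by positivity)
  refine ⟨max |log m| |log M|, fun t => abs_le_max_abs_abs ?_ ?_⟩
  · exact log_le_log hm (ricker_orbit_ge hrec hK hx0 t)
  · exact log_le_log (ricker_orbit_pos hrec hx0 t) (ricker_orbit_le hrec hK t)

theorem sum_ricker_orbit (hx0 : 0 < x 0) (n : ℕ) :
    ∑ t ∈ Finset.range n, (r - K * x t) = log (x n) - log (x 0) := by
  rw [← Finset.sum_range_sub (fun t => log (x t))]
  refine Finset.sum_congr rfl fun t _ => ?_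
  rw [hrec, log_rickerMap (ricker_orbit_pos hrec hx0 t)]
  ring

theorem ricker_orbit_average_eq (hK : 0 < K) (hx0 : 0 < x 0) {n : ℕ} (hn : n ≠ 0) :
    (∑ t ∈ Finset.range n, x t) / n = (r - (log (x n) - log (x 0)) / n) / K := by
  have hsum := sum_ricker_orbit hrec hx0 n
  rw [Finset.sum_sub_distrib, ← Finset.mul_sum, Finset.sum_const, Finset.card_range,
    nsmul_eq_mul] at hsum
  have hn' : (n : ℝ) ≠ 0 := Nat.cast_ne_zero.mpr hn
  field_simp
  linarith

end RickerOrbit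

/-- For the one-dimensional Ricker model x_{t+1} = x_t e^{r - K x_t} with r, K > 0 and
x₀ > 0, the arithmetic averages (1/n)·Σ_{t<n} x_t always converge to r/K. -/
theorem ricker_averages_tendsto (r K : ℝ) (hr : 0 < r) (hK : 0 < K)
    (x : ℕ → ℝ) (hx0 : 0 < x 0)
    (hrec : ∀ t : ℕ, x (t + 1) = x t * Real.exp (r - K * x t)) :
    Tendsto (fun n : ℕ => (∑ t ∈ Finset.range n, x t) / (n : ℝ)) atTop
      (nhds (r / K)) := by
  obtain ⟨C, hC⟩ := ricker_orbit_abs_log_le hrec hr hK hx0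
  have hlog : Tendsto (fun n : ℕ => (log (x n) - log (x 0)) / n) atTop (𝓝 0) :=
    tendsto_div_natCast_of_abs_le fun n =>
      (abs_sub _ _).trans (add_le_add (hC n) (hC 0))
  have hlim := (tendsto_const_nhds (x := r)).sub hlog |>.div_const K
  rw [sub_zero] at hlim
  refine hlim.congr' ?_
  filter_upwards [eventually_ne_atTop 0] with n hn
  exact (ricker_orbit_average_eq hrec hK hx0 hn).symm
end
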